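/- Let R be a commutative ring of prime characteristic p > 0, q = p^γ a power of p, S = R[t], l ≥ 1, A(t) ∈ M_l(S), and let H^e_n(τ) be the matrix polynomials with A(t)^{e−1} = Σ_{0≤n<q^e} H^e_n(t^{q^e}) t^n. Fix e ≥ 1 and 0 ≤ m < q^e with base-p expansion m = Σ_{j=0}^{γe−1} c_j p^j. Let W = D^e_R[t,θ_1,…,θ_{γe}]·(A(t)^{e−1}S^{⊕l}) and W' = D^e_R[t,θ_1,…,θ_{γe}]·(t·A(t)^{e−1}S^{⊕l}). If there exists x ∈ W with x ∉ W' such that θ_i x − c_{i−1} x ∈ W' for all 1 ≤ i ≤ γe (i.e. the class of x is a nonzero eigenvector of eigenvalue m in W/W'), then Σ_{n=0}^{m−1} D^e_R·(H^e_n(τ)R^{⊕l}) ≠ Σ_{n=0}^{m} D^e_R·(H^e_n(τ)R^{⊕l}) as additive subgroups of R[τ]^{⊕l}. -/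

import Mathlib

noncomputable section

open Polynomial

/-- The Frobenius-twisted product `A(t)^{e-1} = A(t)^{[q^{e-1}]} ⋯ A(t)^{[q]} · A(t)`
(with `e` factors), where `B^{[m]}` denotes the matrix of entrywise `m`-th powers. -/
def twistProd {R : Type*} [CommRing R] {l : ℕ} (q : ℕ)
    (A : Matrix (Fin l) (Fin l) (Polynomial R)) : ℕ → Matrix (Fin l) (Fin l) (Polynomial R)
  | 0 => 1
  | e + 1 => (Matrix.of fun i j => (A i j) ^ q ^ e) * twistProd q A e

/-- The matrix polynomial `H^e_n(τ)` extracted from `B = A(t)^{e-1}`: its `τ^k`-coefficient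
is the coefficient of `t^{k q^e + n}` in `B`, so that `B = Σ_{0≤n<q^e} H^e_n(t^{q^e}) t^n`. -/
def Hmat {R : Type*} [CommRing R] {l : ℕ} (q e : ℕ)
    (B : Matrix (Fin l) (Fin l) (Polynomial R)) (n : ℕ) :
    Matrix (Fin l) (Fin l) (Polynomial R) :=
  Matrix.of fun i j =>
    ∑ kk ∈ Finset.range ((B i j).natDegree + 1), C ((B i j).coeff (kk * q ^ e + n)) * X ^ kk

/-- An additive endomorphism `φ` of `R` is `Q`-linear if `φ(a^Q b) = a^Q φ(b)`. -/
def IsQLinear {R : Type*} [CommRing R] (Q : ℕ) (φ : R →+ R) : Prop :=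
  ∀ a b : R, φ (a ^ Q * b) = a ^ Q * φ b

/-- The Euler operator `θ = t^c ∂_t^{[c]}` acting on a polynomial:
`r t^n ↦ binom(n,c) r t^n`. -/
def thetaOp {R : Type*} [CommRing R] (c : ℕ) (f : Polynomial R) : Polynomial R :=
  f.sum fun n a => C ((n.choose c : R) * a) * X ^ n

/-- The coefficientwise action of an additive endomorphism `φ` of `R` on a polynomial. -/
def coeffMap {R : Type*} [CommRing R] (φ : R →+ R) (f : Polynomial R) : Polynomial R :=
  f.sum fun n a => C (φ a) * X ^ n

/-- `D^e_R[t,θ_1,…,θ_{γe}]·T`: the smallest additive subgroup of `R[t]^{⊕l}` containing `T`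
and stable under multiplication by `t`, under `θ_i = t^{p^{i-1}} ∂_t^{[p^{i-1}]}` for
`1 ≤ i ≤ γe`, and under the coefficientwise action of every `Q = q^e`-linear additive
endomorphism of `R`. -/
def VClosure {R : Type*} [CommRing R] {l : ℕ} (p γe Q : ℕ)
    (T : Set (Fin l → Polynomial R)) : AddSubgroup (Fin l → Polynomial R) :=
  sInf {V : AddSubgroup (Fin l → Polynomial R) | T ⊆ ↑V ∧
    (∀ v ∈ V, (fun i => X * v i) ∈ V) ∧
    (∀ i : ℕ, 1 ≤ i → i ≤ γe → ∀ v ∈ V, (fun j => thetaOp (p ^ (i - 1)) (v j)) ∈ V) ∧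
    (∀ φ : R →+ R, IsQLinear Q φ → ∀ v ∈ V, (fun j => coeffMap φ (v j)) ∈ V)}

end

noncomputable section

open Polynomial

/-- Generators of the additive subgroup `D^e_R·(H^e_n(τ) R^{⊕l})` of `R[τ]^{⊕l}`. -/
def DHGens {R : Type*} [CommRing R] {l : ℕ} (q e : ℕ)
    (B : Matrix (Fin l) (Fin l) (Polynomial R)) (n : ℕ) : Set (Fin l → Polynomial R) :=
  {y | ∃ φ : R →+ R, IsQLinear (q ^ e) φ ∧ ∃ v : Fin l → R,
    y = fun i => coeffMap φ (∑ j, Hmat q e B n i j * C (v j))}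

end

/-!
Put `Q = q^e = p^{γe}`, `B = A(t)^{e-1}`, and let `π_m` keep the monomials `t^N` with
`N ≡ m (mod Q)`. By Lucas' theorem `θ_i` multiplies `t^N` by the `(i-1)`-st base-`p` digit of
`N`, so by Fermat `1 - (θ_i - c)^{p-1}` projects onto the monomials with that digit equal to `c`.
Hence every subgroup stable under the `θ_i` is stable under `π_m`, and the eigenvector hypothesis
gives `x ≡ π_m x` modulo `W'`.

Write `B = Σ_{j<Q} H_j(t^Q) t^j`, `x = Σ_{n<Q} x_n(t^Q) t^n`, and
`M_n = Σ_{j<n} D·(H_j R^l) + τ·Σ_{j<Q} D·(H_j R[τ]^l)`. Checking generators and closure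
operations, `x_m ∈ M_{m+1}` for every `x ∈ W`. Conversely, for `g ∈ M_m` the vector
`g(t^Q) t^m` is the `π_m`-part of some `t·B·u ∈ W'`. If the two sums in the statement agree, then
`M_{m+1} = M_m`, so `π_m x = x_m(t^Q) t^m ∈ W'` and `x ∈ W'`, a contradiction.
-/

open Polynomial
open scoped Matrix

theorem Nat.mod_pow_succ_eq_iff {b k N M : ℕ} :
    N % b ^ (k + 1) = M % b ^ (k + 1) ↔
      N % b ^ k = M % b ^ k ∧ N / b ^ k % b = M / b ^ k % b := by
  refine ⟨fun h => ⟨?_, ?_⟩, fun ⟨h₁, h₂⟩ => by rw [Nat.mod_pow_succ, Nat.mod_pow_succ, h₁, h₂]⟩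
  · rw [← Nat.mod_mod_of_dvd N (pow_dvd_pow b k.le_succ),
      ← Nat.mod_mod_of_dvd M (pow_dvd_pow b k.le_succ), h]
  · rw [← Nat.mod_mul_right_div_self, ← Nat.mod_mul_right_div_self, ← pow_succ, h]

theorem AddSubgroup.apply_mem_of_mem_closure {G H : Type*} [AddGroup G] [AddGroup H]
    {s : Set G} {K : AddSubgroup H} (F : G → H) (hF : ∀ a b, F (a + b) = F a + F b)
    (hs : ∀ y ∈ s, F y ∈ K) {g : G} (hg : g ∈ AddSubgroup.closure s) : F g ∈ K :=
  (AddSubgroup.closure_le (K.comap (AddMonoidHom.mk' F hF))).mpr hs hg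

theorem Matrix.exists_mulVec_eq_sum_X_pow_smul {R m n : Type*} [CommRing R] [Fintype n]
    (M : Matrix m n R[X]) (u : n → R[X]) :
    ∃ D, M *ᵥ u = ∑ b ∈ Finset.range D, (X : R[X]) ^ b • M *ᵥ fun i => C ((u i).coeff b) := by
  refine ⟨Finset.univ.sup (fun i => (u i).natDegree) + 1, ?_⟩
  simp_rw [← Matrix.mulVec_smul, ← Matrix.mulVec_sum]
  congr 1
  funext i
  have hdeg : (u i).natDegree < Finset.univ.sup (fun i => (u i).natDegree) + 1 :=
    Nat.lt_succ_of_le (Finset.le_sup (f := fun i => (u i).natDegree) (Finset.mem_univ i))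
  conv_lhs => rw [as_sum_range' (u i) _ hdeg]
  simp only [Finset.sum_apply, Pi.smul_apply, smul_eq_mul, ← C_mul_X_pow_eq_monomial, mul_comm]

noncomputable section CoeffOperators

variable {R : Type*} [CommRing R]

theorem Polynomial.coeff_sum_monomial {g : ℕ → R → R} (hg : ∀ n, g n 0 = 0) (f : R[X])
    (N : ℕ) : (f.sum fun n a => monomial n (g n a)).coeff N = g N (f.coeff N) := by
  rw [coeff_sum, sum_def,
    Finset.sum_eq_single N (fun b _ hb => by rw [coeff_monomial, if_neg hb])]
  · rw [coeff_monomial, if_pos rfl]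
  · intro hN
    rw [notMem_support_iff.mp hN, coeff_monomial, if_pos rfl, hg]

theorem coeff_thetaOp (c : ℕ) (f : R[X]) (N : ℕ) :
    (thetaOp c f).coeff N = N.choose c * f.coeff N := by
  simp only [thetaOp, C_mul_X_pow_eq_monomial]
  exact coeff_sum_monomial (fun _ => mul_zero _) f N

theorem coeff_coeffMap (φ : R →+ R) (f : R[X]) (N : ℕ) :
    (coeffMap φ f).coeff N = φ (f.coeff N) := by
  simp only [coeffMap, C_mul_X_pow_eq_monomial]
  exact coeff_sum_monomial (fun _ => map_zero φ) f N

def scaleCoeffs (s : ℕ → R) : R[X] →+ R[X] :=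
  AddMonoidHom.mk' (fun f => f.sum fun n a => monomial n (s n * a)) fun f g => by
    ext N
    simp only [coeff_add, coeff_sum_monomial (fun _ => mul_zero _), mul_add]

theorem coeff_scaleCoeffs (s : ℕ → R) (f : R[X]) (N : ℕ) :
    (scaleCoeffs s f).coeff N = s N * f.coeff N :=
  coeff_sum_monomial (fun _ => mul_zero _) f N

def restrictMod (Q m : ℕ) : R[X] →+ R[X] :=
  scaleCoeffs fun N => if N % Q = m then 1 else 0

theorem coeff_restrictMod (Q m : ℕ) (f : R[X]) (N : ℕ) :
    (restrictMod Q m f).coeff N = if N % Q = m then f.coeff N else 0 := by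
  rw [restrictMod, coeff_scaleCoeffs, ite_mul, one_mul, zero_mul]

theorem coeffMap_add (φ : R →+ R) (f g : R[X]) :
    coeffMap φ (f + g) = coeffMap φ f + coeffMap φ g := by
  ext N
  simp only [coeff_coeffMap, coeff_add, map_add]

theorem coeffMap_sum {ι : Type*} (φ : R →+ R) (s : Finset ι) (g : ι → R[X]) :
    coeffMap φ (∑ b ∈ s, g b) = ∑ b ∈ s, coeffMap φ (g b) := by
  ext N
  simp only [coeff_coeffMap, finsetSum_coeff, map_sum]

theorem coeffMap_id (f : R[X]) : coeffMap (AddMonoidHom.id R) f = f := by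
  ext N
  rw [coeff_coeffMap, AddMonoidHom.id_apply]

theorem coeffMap_coeffMap (φ ψ : R →+ R) (f : R[X]) :
    coeffMap φ (coeffMap ψ f) = coeffMap (φ.comp ψ) f := by
  ext N
  simp only [coeff_coeffMap, AddMonoidHom.comp_apply]

theorem coeffMap_X_pow_mul (φ : R →+ R) (b : ℕ) (f : R[X]) :
    coeffMap φ (X ^ b * f) = X ^ b * coeffMap φ f := by
  ext N
  simp only [coeff_coeffMap, coeff_X_pow_mul']
  split_ifs <;> simp

theorem coeffMap_expand_mul_X_pow {Q : ℕ} (hQ : 0 < Q) (m : ℕ) (φ : R →+ R) (g : R[X]) :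
    coeffMap φ (expand R Q g * X ^ m) = expand R Q (coeffMap φ g) * X ^ m := by
  ext N
  simp only [coeff_coeffMap, coeff_mul_X_pow', coeff_expand hQ]
  split_ifs <;> simp

theorem IsQLinear.id (Q : ℕ) : IsQLinear Q (AddMonoidHom.id R) := fun _ _ => rfl

theorem IsQLinear.comp {Q : ℕ} {φ ψ : R →+ R} (hφ : IsQLinear Q φ) (hψ : IsQLinear Q ψ) :
    IsQLinear Q (φ.comp ψ) := fun a b => by
  simp only [AddMonoidHom.comp_apply, hψ a b, hφ a]

end CoeffOperators

section Digits

variable {R : Type*} [CommRing R] (p : ℕ) [Fact p.Prime] [CharP R p]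

theorem choose_prime_pow_cast (i N : ℕ) : (N.choose (p ^ i) : R) = (N / p ^ i % p : ℕ) := by
  have hp := (Fact.out : p.Prime).pos
  have hlucas :=
    Choose.choose_modEq_choose_mul_prod_range_choose (p := p) (n := N) (k := p ^ i) i
  have hdigit : ∀ j ∈ Finset.range i, (N / p ^ j % p).choose (p ^ i / p ^ j % p) = 1 := by
    intro j hj
    rw [Nat.pow_div (Finset.mem_range.mp hj).le hp,
      Nat.mod_eq_zero_of_dvd (dvd_pow_self p (by simp at hj; omega)), Nat.choose_zero_right]
  rw [Finset.prod_congr rfl hdigit, Finset.prod_const_one, Nat.div_self (pow_pos hp i),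
    Nat.choose_one_right, Nat.cast_one, mul_one] at hlucas
  rw [← CharP.cast_eq_mod]
  exact_mod_cast (CharP.intCast_eq_intCast R p).mpr hlucas

theorem sub_pow_prime_sub_one {a b : ℕ} (ha : a < p) (hb : b < p) :
    ((a : R) - b) ^ (p - 1) = if a = b then 0 else 1 := by
  have hZ : ((a : ZMod p) - b) ^ (p - 1) = if a = b then 0 else 1 := by
    split_ifs with hab
    · rw [hab, sub_self, zero_pow (Nat.sub_ne_zero_of_lt (Fact.out : p.Prime).one_lt)]
    · refine ZMod.pow_card_sub_one_eq_one (sub_ne_zero.mpr fun h => hab ?_)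
      rwa [ZMod.natCast_eq_natCast_iff', Nat.mod_eq_of_lt ha, Nat.mod_eq_of_lt hb] at h
  simpa [apply_ite] using congrArg (ZMod.castHom (dvd_refl p) R) hZ

end Digits

section ResidueFiltering

variable {R : Type*} [CommRing R] {ι : Type*}

theorem thetaOp_comp_sub_nsmul (c d : ℕ) (v : ι → R[X]) :
    thetaOp c ∘ v - d • v = scaleCoeffs (fun N => (N.choose c : R) - d) ∘ v := by
  funext j
  ext N
  simp [coeff_thetaOp, coeff_scaleCoeffs, sub_mul, nsmul_eq_mul]

theorem scaleCoeffs_pow_succ_comp_mem {V : AddSubgroup (ι → R[X])} {c : ℕ}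
    (hV : ∀ v ∈ V, thetaOp c ∘ v ∈ V) (d k : ℕ) {v : ι → R[X]}
    (hv : thetaOp c ∘ v - d • v ∈ V) :
    scaleCoeffs (fun N => ((N.choose c : R) - d) ^ (k + 1)) ∘ v ∈ V := by
  rw [thetaOp_comp_sub_nsmul] at hv
  induction k generalizing v with
  | zero => simpa only [zero_add, pow_one] using hv
  | succ k ih =>
    have hE : thetaOp c ∘ _ - d • _ ∈ V := sub_mem (hV _ hv) (nsmul_mem hv d)
    rw [thetaOp_comp_sub_nsmul] at hE
    convert ih hE using 1
    funext j
    ext N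
    simp only [Function.comp_apply, coeff_scaleCoeffs, pow_succ, mul_assoc]

variable (p : ℕ) [Fact p.Prime] [CharP R p]

theorem restrictMod_pow_succ (n k : ℕ) (f : R[X]) :
    restrictMod (p ^ (k + 1)) (n % p ^ (k + 1)) f =
      restrictMod (p ^ k) (n % p ^ k) (f - scaleCoeffs
        (fun N => ((N.choose (p ^ k) : R) - (n / p ^ k % p : ℕ)) ^ (p - 1)) f) := by
  have hp := (Fact.out : p.Prime).pos
  ext N
  simp only [coeff_restrictMod, coeff_sub, coeff_scaleCoeffs, choose_prime_pow_cast p,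
    sub_pow_prime_sub_one p (Nat.mod_lt _ hp) (Nat.mod_lt _ hp), Nat.mod_pow_succ_eq_iff]
  split_ifs <;> simp_all

theorem sub_restrictMod_comp_mem {V : AddSubgroup (ι → R[X])} {Γ : ℕ}
    (hV : ∀ i < Γ, ∀ v ∈ V, thetaOp (p ^ i) ∘ v ∈ V) (n : ℕ) {x : ι → R[X]}
    (hx : ∀ i < Γ, thetaOp (p ^ i) ∘ x - (n / p ^ i % p) • x ∈ V) :
    x - restrictMod (p ^ Γ) (n % p ^ Γ) ∘ x ∈ V := by
  suffices ∀ k ≤ Γ, ∀ x : ι → R[X],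
      (∀ i < Γ, thetaOp (p ^ i) ∘ x - (n / p ^ i % p) • x ∈ V) →
        x - restrictMod (p ^ k) (n % p ^ k) ∘ x ∈ V from this Γ le_rfl x hx
  intro k
  induction k with
  | zero =>
    intro _ x _
    convert zero_mem V
    funext j
    ext N
    simp [coeff_restrictMod, Nat.mod_one]
  | succ k ih =>
    intro hk x hx
    obtain ⟨r, hr⟩ : ∃ r, p - 1 = r + 1 :=
      ⟨p - 2, by have := (Fact.out : p.Prime).two_le; omega⟩
    set π := restrictMod (R := R) (p ^ k) (n % p ^ k)
    set y := scaleCoeffs (fun N => ((N.choose (p ^ k) : R) - (n / p ^ k % p : ℕ)) ^ (p - 1)) ∘ x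
    have hy : y ∈ V := by
      simp only [y, hr]
      exact scaleCoeffs_pow_succ_comp_mem (hV k (by omega)) _ r (hx k (by omega))
    have hπy : y - π ∘ y ∈ V := ih (by omega) y fun i hi => sub_mem (hV i hi y hy) (nsmul_mem hy _)
    have hsplit : x - restrictMod (p ^ (k + 1)) (n % p ^ (k + 1)) ∘ x =
        (x - π ∘ x) + (y - (y - π ∘ y)) := by
      funext j
      simp only [Pi.sub_apply, Pi.add_apply, Function.comp_apply, restrictMod_pow_succ, map_sub,
        π, y]
      abel
    rw [hsplit]
    exact add_mem (ih (by omega) x hx) (sub_mem hy hπy)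

theorem restrictMod_comp_mem {V : AddSubgroup (ι → R[X])} {Γ : ℕ}
    (hV : ∀ i < Γ, ∀ v ∈ V, thetaOp (p ^ i) ∘ v ∈ V) (n : ℕ) {v : ι → R[X]} (hv : v ∈ V) :
    restrictMod (p ^ Γ) (n % p ^ Γ) ∘ v ∈ V := by
  have := sub_restrictMod_comp_mem p hV n fun i hi => sub_mem (hV i hi v hv) (nsmul_mem hv _)
  simpa using sub_mem hv this

end ResidueFiltering

noncomputable section Slices

variable {R : Type*} [CommRing R] {Q : ℕ}

def slice (Q n : ℕ) (f : R[X]) : R[X] :=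
  ∑ k ∈ Finset.range (f.natDegree + 1), C (f.coeff (k * Q + n)) * X ^ k

theorem Hmat_apply (q e : ℕ) {l : ℕ} (B : Matrix (Fin l) (Fin l) R[X]) (n : ℕ) (i j : Fin l) :
    Hmat q e B n i j = slice (q ^ e) n (B i j) :=
  rfl

theorem coeff_slice (hQ : 0 < Q) (n : ℕ) (f : R[X]) (k : ℕ) :
    (slice Q n f).coeff k = f.coeff (k * Q + n) := by
  simp only [slice, finsetSum_coeff, coeff_C_mul_X_pow]
  rw [Finset.sum_ite_eq]
  split_ifs with hk
  · rfl
  · rw [Finset.mem_range, not_lt] at hk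
    refine (coeff_eq_zero_of_natDegree_lt ?_).symm
    nlinarith

theorem slice_zero (n : ℕ) : slice Q n (0 : R[X]) = 0 := by
  simp [slice]

theorem slice_add (hQ : 0 < Q) (n : ℕ) (f g : R[X]) :
    slice Q n (f + g) = slice Q n f + slice Q n g := by
  ext k
  simp only [coeff_add, coeff_slice hQ]

theorem slice_neg (hQ : 0 < Q) (n : ℕ) (f : R[X]) : slice Q n (-f) = -slice Q n f := by
  ext k
  simp only [coeff_neg, coeff_slice hQ]

theorem slice_X_mul (hQ : 0 < Q) {n : ℕ} (hn : n < Q) (f : R[X]) :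
    slice Q n (X * f) = if n = 0 then X * slice Q (Q - 1) f else slice Q (n - 1) f := by
  ext k
  rw [coeff_slice hQ]
  split_ifs with hn0
  · subst hn0
    cases k with
    | zero => rw [zero_mul, coeff_X_mul_zero, coeff_X_mul_zero]
    | succ k =>
      rw [show (k + 1) * Q + 0 = k * Q + (Q - 1) + 1 by rw [Nat.succ_mul]; omega, coeff_X_mul,
        coeff_X_mul, coeff_slice hQ]
  · rw [show k * Q + n = k * Q + (n - 1) + 1 by omega, coeff_X_mul, coeff_slice hQ]

theorem slice_coeffMap (hQ : 0 < Q) (n : ℕ) (φ : R →+ R) (f : R[X]) :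
    slice Q n (coeffMap φ f) = coeffMap φ (slice Q n f) := by
  ext k
  rw [coeff_slice hQ, coeff_coeffMap, coeff_coeffMap, coeff_slice hQ]

theorem slice_thetaOp (p : ℕ) [Fact p.Prime] [CharP R p] {Γ i : ℕ} (hQ : Q = p ^ Γ)
    (hi : i < Γ) (n : ℕ) (f : R[X]) :
    slice Q n (thetaOp (p ^ i) f) = (n / p ^ i % p) • slice Q n f := by
  have hp := (Fact.out : p.Prime).pos
  have hQ₀ : 0 < Q := hQ ▸ pow_pos hp Γ
  obtain ⟨r, hr⟩ : p ^ (i + 1) ∣ Q := hQ ▸ pow_dvd_pow p hi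
  have hdigit (k : ℕ) : (k * Q + n) / p ^ i % p = n / p ^ i % p := by
    rw [hr, pow_succ, show k * (p ^ i * p * r) + n = n + p ^ i * (k * r * p) by ring,
      Nat.add_mul_div_left _ _ (pow_pos hp i), Nat.add_mul_mod_self_right]
  ext k
  rw [coeff_slice hQ₀, coeff_thetaOp, coeff_smul, coeff_slice hQ₀, choose_prime_pow_cast p,
    nsmul_eq_mul, hdigit]

theorem coeff_expand_mul_X_pow (hQ : 0 < Q) {m : ℕ} (hm : m < Q) (g : R[X]) (N : ℕ) :
    (expand R Q g * X ^ m).coeff N = if N % Q = m then g.coeff (N / Q) else 0 := by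
  rw [coeff_mul_X_pow', coeff_expand hQ]
  by_cases hN : N % Q = m
  · have hNm : N - m = Q * (N / Q) := by have := Nat.div_add_mod N Q; omega
    rw [if_pos (hN ▸ Nat.mod_le N Q), hNm, if_pos (dvd_mul_right Q _),
      Nat.mul_div_cancel_left _ hQ, if_pos hN]
  · rw [if_neg hN]
    split_ifs with hle hdvd
    · obtain ⟨t, ht⟩ := hdvd
      exact absurd (by rw [show N = m + Q * t by omega, Nat.add_mul_mod_self_left,
        Nat.mod_eq_of_lt hm]) hN
    · rfl
    · rfl

theorem restrictMod_eq_expand_slice (hQ : 0 < Q) {m : ℕ} (hm : m < Q) (f : R[X]) :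
    restrictMod Q m f = expand R Q (slice Q m f) * X ^ m := by
  ext N
  rw [coeff_restrictMod, coeff_expand_mul_X_pow hQ hm]
  split_ifs with hN
  · rw [coeff_slice hQ, ← hN, Nat.div_add_mod']
  · rfl

theorem sum_restrictMod (hQ : 0 < Q) (f : R[X]) :
    ∑ m ∈ Finset.range Q, restrictMod Q m f = f := by
  ext N
  simp only [finsetSum_coeff, coeff_restrictMod]
  rw [Finset.sum_ite_eq, if_pos (Finset.mem_range.mpr (Nat.mod_lt N hQ))]

theorem sum_expand_slice (hQ : 0 < Q) (f : R[X]) :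
    ∑ j ∈ Finset.range Q, expand R Q (slice Q j f) * X ^ j = f := by
  conv_rhs => rw [← sum_restrictMod hQ f]
  exact Finset.sum_congr rfl fun j hj =>
    (restrictMod_eq_expand_slice hQ (Finset.mem_range.mp hj) f).symm

theorem restrictMod_expand_mul_X_pow (hQ : 0 < Q) (m : ℕ) (g : R[X]) (t : ℕ) :
    restrictMod Q m (expand R Q g * X ^ t) =
      if t % Q = m then expand R Q g * X ^ t else 0 := by
  have hsplit : expand R Q g * X ^ t = expand R Q (g * X ^ (t / Q)) * X ^ (t % Q) := by
    rw [map_mul, map_pow, expand_X, mul_assoc, ← pow_mul, ← pow_add, Nat.mul_comm,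
      Nat.div_add_mod']
  rw [hsplit]
  ext N
  rw [coeff_restrictMod]
  by_cases ht : t % Q = m
  · rw [if_pos ht]
    split_ifs with hN
    · rfl
    · rw [coeff_expand_mul_X_pow hQ (Nat.mod_lt t hQ), if_neg fun h => hN (h.trans ht)]
  · rw [if_neg ht, coeff_zero]
    split_ifs with hN
    · rw [coeff_expand_mul_X_pow hQ (Nat.mod_lt t hQ), if_neg fun h => ht (h.symm.trans hN)]
    · rfl

theorem restrictMod_mul_expand_mul_X_pow (hQ : 0 < Q) {m j s : ℕ} (hj : j < Q)
    (hjs : (j + s) % Q = m) (b g : R[X]) :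
    restrictMod Q m (b * (expand R Q g * X ^ s)) =
      expand R Q (slice Q j b * g) * X ^ (j + s) := by
  have hterm (j' : ℕ) : expand R Q (slice Q j' b) * X ^ j' * (expand R Q g * X ^ s) =
      expand R Q (slice Q j' b * g) * X ^ (j' + s) := by
    rw [map_mul, pow_add]
    ring
  have hres : ∀ j' ∈ Finset.range Q, (j' + s) % Q = m ↔ j = j' := by
    intro j' hj'
    rw [← hjs]
    refine ⟨fun h => ?_, fun h => h ▸ rfl⟩
    simpa [Nat.ModEq, Nat.mod_eq_of_lt hj, Nat.mod_eq_of_lt (Finset.mem_range.mp hj')] using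
      (Nat.ModEq.add_right_cancel' s h).symm
  conv_lhs => rw [← sum_expand_slice hQ b]
  rw [Finset.sum_mul, map_sum]
  simp only [hterm, restrictMod_expand_mul_X_pow hQ m]
  rw [Finset.sum_congr rfl fun j' hj' => if_congr (hres j' hj') rfl rfl, Finset.sum_ite_eq,
    if_pos (Finset.mem_range.mpr hj)]

end Slices

namespace VClosure

variable {R : Type*} [CommRing R] {l p Γ Q : ℕ} {T : Set (Fin l → R[X])} {v : Fin l → R[X]}

theorem subset : T ⊆ VClosure p Γ Q T :=
  fun _ hv => AddSubgroup.mem_sInf.mpr fun _ hV => hV.1 hv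

theorem thetaOp_mem {i : ℕ} (hi : i < Γ) (hv : v ∈ VClosure p Γ Q T) :
    thetaOp (p ^ i) ∘ v ∈ VClosure p Γ Q T :=
  AddSubgroup.mem_sInf.mpr fun V hV => by
    have h := hV.2.2.1 (i + 1) (by omega) (by omega) v (AddSubgroup.mem_sInf.mp hv V hV)
    rwa [Nat.add_sub_cancel] at h

theorem coeffMap_mem {φ : R →+ R} (hφ : IsQLinear Q φ) (hv : v ∈ VClosure p Γ Q T) :
    coeffMap φ ∘ v ∈ VClosure p Γ Q T :=
  AddSubgroup.mem_sInf.mpr fun V hV => hV.2.2.2 φ hφ v (AddSubgroup.mem_sInf.mp hv V hV)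

theorem le_of_stable {V : AddSubgroup (Fin l → R[X])} (hT : T ⊆ V)
    (hX : ∀ v ∈ V, (fun i => X * v i) ∈ V) (hθ : ∀ i < Γ, ∀ v ∈ V, thetaOp (p ^ i) ∘ v ∈ V)
    (hφ : ∀ φ : R →+ R, IsQLinear Q φ → ∀ v ∈ V, coeffMap φ ∘ v ∈ V) :
    VClosure p Γ Q T ≤ V :=
  sInf_le ⟨hT, hX, fun i hi₁ hi₂ v hv => hθ (i - 1) (by omega) v hv, hφ⟩

end VClosure

noncomputable section HSpan

variable {R : Type*} [CommRing R] {l : ℕ} (q e : ℕ) (B : Matrix (Fin l) (Fin l) R[X])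

/-- `M_n = Σ_{j<n} D^e_R·(H^e_j(τ) R^{⊕l}) + τ·Σ_{j<q^e} D^e_R·(H^e_j(τ) R[τ]^{⊕l})`, `τ = X`. -/
def hSpan (n : ℕ) : AddSubgroup (Fin l → R[X]) :=
  AddSubgroup.closure {y | ∃ φ : R →+ R, IsQLinear (q ^ e) φ ∧ ∃ a j : ℕ, j < q ^ e ∧
    (j < n ∨ 1 ≤ a) ∧ ∃ f : Fin l → R[X], y = fun i => coeffMap φ (X ^ a * (Hmat q e B j *ᵥ f) i)}

def hSpanSlices : AddSubgroup (Fin l → R[X]) where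
  carrier := {w | ∀ n < q ^ e, (fun i => slice (q ^ e) n (w i)) ∈ hSpan q e B (n + 1)}
  zero_mem' := fun n _ => by
    convert zero_mem (hSpan q e B (n + 1)) using 1
    exact funext fun _ => slice_zero n
  add_mem' := fun ha hb n hn => by
    convert add_mem (ha n hn) (hb n hn) using 1
    exact funext fun _ => slice_add (by omega) n _ _
  neg_mem' := fun ha n hn => by
    convert neg_mem (ha n hn) using 1
    exact funext fun _ => slice_neg (by omega) n _

variable {q e B}

theorem mem_hSpan {n a j : ℕ} {φ : R →+ R} (hφ : IsQLinear (q ^ e) φ) (hj : j < q ^ e)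
    (hja : j < n ∨ 1 ≤ a) (f : Fin l → R[X]) :
    (fun i => coeffMap φ (X ^ a * (Hmat q e B j *ᵥ f) i)) ∈ hSpan q e B n :=
  AddSubgroup.subset_closure ⟨φ, hφ, a, j, hj, hja, f, rfl⟩

theorem hSpan_mono : Monotone (hSpan q e B) := fun _ _ hnk =>
  AddSubgroup.closure_mono fun _ ⟨φ, hφ, a, j, hj, hja, f, hy⟩ =>
    ⟨φ, hφ, a, j, hj, hja.imp_left (lt_of_lt_of_le · hnk), f, hy⟩

theorem X_mul_mem_hSpan {n k : ℕ} {g : Fin l → R[X]} (hg : g ∈ hSpan q e B n) :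
    (fun i => X * g i) ∈ hSpan q e B k := by
  refine AddSubgroup.apply_mem_of_mem_closure (K := hSpan q e B k) (fun g i => X * g i)
    (fun _ _ => funext fun _ => mul_add _ _ _) ?_ hg
  rintro _ ⟨φ, hφ, a, j, hj, -, f, rfl⟩
  convert mem_hSpan (a := a + 1) hφ hj (Or.inr le_add_self) f using 2 with i
  rw [pow_succ', mul_assoc]
  simpa using (coeffMap_X_pow_mul φ 1 _).symm

theorem coeffMap_mem_hSpan {n : ℕ} {φ : R →+ R} (hφ : IsQLinear (q ^ e) φ)
    {g : Fin l → R[X]} (hg : g ∈ hSpan q e B n) : coeffMap φ ∘ g ∈ hSpan q e B n := by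
  refine AddSubgroup.apply_mem_of_mem_closure (K := hSpan q e B n) (coeffMap φ ∘ ·)
    (fun _ _ => funext fun _ => coeffMap_add φ _ _) ?_ hg
  rintro _ ⟨ψ, hψ, a, j, hj, hja, f, rfl⟩
  simpa only [Function.comp_def, coeffMap_coeffMap] using mem_hSpan (hφ.comp hψ) hj hja f

theorem DHGens_subset_hSpan {n : ℕ} (hn : n < q ^ e) :
    DHGens q e B n ⊆ hSpan q e B (n + 1) := by
  rintro _ ⟨φ, hφ, v, rfl⟩
  simpa [Matrix.mulVec, dotProduct] using
    mem_hSpan (a := 0) hφ hn (Or.inl n.lt_succ_self) fun j => C (v j)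

theorem closure_DHGens_le_hSpan {m : ℕ} (hm : m ≤ q ^ e) :
    AddSubgroup.closure (⋃ n ∈ Finset.range m, DHGens q e B n) ≤ hSpan q e B m :=
  (AddSubgroup.closure_le _).mpr <| Set.iUnion₂_subset fun n hn =>
    (DHGens_subset_hSpan (by simp at hn; omega)).trans (hSpan_mono (by simpa using hn))

theorem hSpan_succ_le {m : ℕ} (h : DHGens q e B m ⊆ hSpan q e B m) :
    hSpan q e B (m + 1) ≤ hSpan q e B m := by
  refine (AddSubgroup.closure_le _).mpr ?_
  rintro _ ⟨φ, hφ, a, j, hj, hja, f, rfl⟩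
  by_cases hja' : j < m ∨ 1 ≤ a
  · exact mem_hSpan hφ hj hja' f
  obtain ⟨rfl, rfl⟩ : j = m ∧ a = 0 := by omega
  obtain ⟨D, hD⟩ := Matrix.exists_mulVec_eq_sum_X_pow_smul (Hmat q e B j) f
  have hsum : (fun i => coeffMap φ (X ^ 0 * (Hmat q e B j *ᵥ f) i)) = ∑ b ∈ Finset.range D,
      fun i => coeffMap φ (X ^ b * (Hmat q e B j *ᵥ fun i' => C ((f i').coeff b)) i) := by
    funext i
    simp [hD, Finset.sum_apply, coeffMap_sum]
  rw [hsum]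
  refine sum_mem fun b _ => ?_
  rcases Nat.eq_zero_or_pos b with rfl | hb
  · refine h ⟨φ, hφ, fun i' => (f i').coeff 0, ?_⟩
    simp [Matrix.mulVec, dotProduct]
  · exact mem_hSpan hφ hj (Or.inr hb) _

theorem X_mul_mem_hSpanSlices {w : Fin l → R[X]} (hw : w ∈ hSpanSlices q e B) :
    (fun i => X * w i) ∈ hSpanSlices q e B := by
  intro n hn
  simp only [slice_X_mul (by omega : 0 < q ^ e) hn]
  split_ifs with hn0
  · exact X_mul_mem_hSpan (hw _ (by omega))
  · exact hSpan_mono (by omega) (hw (n - 1) (by omega))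

theorem mulVec_mem_hSpanSlices (u : Fin l → R[X]) : B *ᵥ u ∈ hSpanSlices q e B := by
  have hC (v : Fin l → R) : (B *ᵥ fun j => C (v j)) ∈ hSpanSlices q e B := by
    intro n hn
    have hsec : (fun i => slice (q ^ e) n ((B *ᵥ fun j => C (v j)) i)) =
        Hmat q e B n *ᵥ fun j => C (v j) := by
      funext i
      ext k
      simp [Matrix.mulVec, dotProduct, finsetSum_coeff, coeff_mul_C,
        coeff_slice (by omega : 0 < q ^ e), Hmat_apply]
    rw [hsec]
    simpa [coeffMap_id] using
      mem_hSpan (a := 0) (IsQLinear.id (q ^ e)) hn (Or.inl n.lt_succ_self) fun j => C (v j)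
  have hXpow (b : ℕ) {w : Fin l → R[X]} (hw : w ∈ hSpanSlices q e B) :
      (X : R[X]) ^ b • w ∈ hSpanSlices q e B := by
    induction b with
    | zero => simpa using hw
    | succ b ih => rw [pow_succ', mul_smul]; exact X_mul_mem_hSpanSlices ih
  obtain ⟨D, hD⟩ := B.exists_mulVec_eq_sum_X_pow_smul u
  rw [hD]
  exact sum_mem fun b _ => hXpow b (hC _)

end HSpan

section Sections

variable {R : Type*} [CommRing R] {l q e : ℕ} {B : Matrix (Fin l) (Fin l) R[X]}
  (p : ℕ) [Fact p.Prime] [CharP R p] {Γ : ℕ}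

theorem slice_mem_hSpan (hQ : q ^ e = p ^ Γ) {x : Fin l → R[X]}
    (hx : x ∈ VClosure p Γ (q ^ e) {w | ∃ u, w = B *ᵥ u}) {n : ℕ} (hn : n < q ^ e) :
    (fun i => slice (q ^ e) n (x i)) ∈ hSpan q e B (n + 1) := by
  have hQ₀ : 0 < q ^ e := hQ ▸ pow_pos (Fact.out : p.Prime).pos Γ
  refine VClosure.le_of_stable ?_ (fun _ => X_mul_mem_hSpanSlices) ?_ ?_ hx n hn
  · rintro _ ⟨u, rfl⟩
    exact mulVec_mem_hSpanSlices u
  · intro i hi w hw k hk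
    simp only [Function.comp_apply, slice_thetaOp p hQ hi]
    exact nsmul_mem (hw k hk) _
  · intro φ hφ w hw k hk
    simp only [Function.comp_apply, slice_coeffMap hQ₀]
    exact coeffMap_mem_hSpan hφ (hw k hk)

theorem expand_mul_X_pow_Hmat_mem (hQ : q ^ e = p ^ Γ) {m a j : ℕ} (hm : m < q ^ e)
    (hj : j < q ^ e) (hja : j < m + a * q ^ e) (f : Fin l → R[X]) :
    (fun i => expand R (q ^ e) (X ^ a * (Hmat q e B j *ᵥ f) i) * X ^ m) ∈
      VClosure p Γ (q ^ e) {w | ∃ u, w = fun i => X * (B *ᵥ u) i} := by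
  have hQ₀ : 0 < q ^ e := hQ ▸ pow_pos (Fact.out : p.Prime).pos Γ
  -- Among the sections `H_{j'}(t^Q) t^{j'}` of `B`, multiplication by `t^s` moves only the
  -- `j`-th one into the residue class of `m`.
  set s := m + a * q ^ e - j
  have hw := VClosure.subset (p := p) (Γ := Γ) (Q := q ^ e)
    (T := {w | ∃ u, w = fun i => X * (B *ᵥ u) i})
    ⟨fun i => expand R (q ^ e) (f i) * X ^ (s - 1), rfl⟩
  have hres := restrictMod_comp_mem p (fun i hi v hv => VClosure.thetaOp_mem hi hv) m hw
  rw [← hQ, Nat.mod_eq_of_lt hm] at hres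
  convert hres using 1
  funext i
  have hjs : (j + s) % q ^ e = m := by
    rw [show j + s = m + a * q ^ e by omega, Nat.add_mul_mod_self_right, Nat.mod_eq_of_lt hm]
  have hentry (i' : Fin l) : X * (B i i' * (expand R (q ^ e) (f i') * X ^ (s - 1))) =
      B i i' * (expand R (q ^ e) (f i') * X ^ s) := by
    conv_rhs => rw [← Nat.sub_add_cancel (show 1 ≤ s by omega), pow_succ]
    ring
  simp only [Function.comp_apply, Matrix.mulVec, dotProduct, Finset.mul_sum, map_sum, hentry,
    restrictMod_mul_expand_mul_X_pow hQ₀ hj hjs, ← Finset.sum_mul, Hmat_apply]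
  rw [show j + s = m + a * q ^ e by omega]
  simp only [map_mul, map_pow, expand_X, Finset.sum_mul, pow_add, ← pow_mul]
  exact Finset.sum_congr rfl fun _ _ => by ring

theorem expand_mul_X_pow_mem_of_mem_hSpan (hQ : q ^ e = p ^ Γ) {m : ℕ} (hm : m < q ^ e)
    {g : Fin l → R[X]} (hg : g ∈ hSpan q e B m) :
    (fun i => expand R (q ^ e) (g i) * X ^ m) ∈
      VClosure p Γ (q ^ e) {w | ∃ u, w = fun i => X * (B *ᵥ u) i} := by
  have hQ₀ : 0 < q ^ e := hQ ▸ pow_pos (Fact.out : p.Prime).pos Γ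
  refine AddSubgroup.apply_mem_of_mem_closure (K := VClosure p Γ (q ^ e) _)
    (fun g i => expand R (q ^ e) (g i) * X ^ m)
    (fun _ _ => funext fun _ => by simp only [Pi.add_apply, map_add, add_mul]) ?_ hg
  rintro _ ⟨φ, hφ, a, j, hj, hja, f, rfl⟩
  have hja' : j < m + a * q ^ e := by
    rcases hja with hjm | ha
    · omega
    · nlinarith
  simpa only [Function.comp_def, coeffMap_expand_mul_X_pow hQ₀] using
    VClosure.coeffMap_mem hφ (expand_mul_X_pow_Hmat_mem p hQ hm hj hja' f)

end Sections

open Polynomial in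
theorem stmt_18_general {R : Type*} [CommRing R] (p : ℕ) [Fact p.Prime] [CharP R p]
    (γ : ℕ) (q : ℕ) (hq : q = p ^ γ)
    (l : ℕ) (A : Matrix (Fin l) (Fin l) (Polynomial R))
    (e : ℕ) (m : ℕ) (hm : m < q ^ e)
    (x : Fin l → Polynomial R)
    (hxW : x ∈ VClosure p (γ * e) (q ^ e)
      {w : Fin l → Polynomial R | ∃ u : Fin l → Polynomial R, w = (twistProd q A e).mulVec u})
    (hxW' : x ∉ VClosure p (γ * e) (q ^ e)
      {w : Fin l → Polynomial R | ∃ u : Fin l → Polynomial R,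
        w = fun i => X * (twistProd q A e).mulVec u i})
    (heig : ∀ i : ℕ, 1 ≤ i → i ≤ γ * e →
      (fun j => thetaOp (p ^ (i - 1)) (x j)) - (m / p ^ (i - 1) % p) • x ∈
        VClosure p (γ * e) (q ^ e)
          {w : Fin l → Polynomial R | ∃ u : Fin l → Polynomial R,
            w = fun i => X * (twistProd q A e).mulVec u i}) :
    AddSubgroup.closure (⋃ n ∈ Finset.range m, DHGens q e (twistProd q A e) n)
      ≠ AddSubgroup.closure (⋃ n ∈ Finset.range (m + 1), DHGens q e (twistProd q A e) n) := by
  intro hcl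
  set B := twistProd q A e
  set W' := VClosure p (γ * e) (q ^ e) {w | ∃ u, w = fun i => X * (B *ᵥ u) i}
  have hQ : q ^ e = p ^ (γ * e) := by rw [hq, ← pow_mul]
  have hQ₀ : 0 < q ^ e := hQ ▸ pow_pos (Fact.out : p.Prime).pos _
  have hx : x - restrictMod (q ^ e) m ∘ x ∈ W' := by
    have := sub_restrictMod_comp_mem p (Γ := γ * e)
      (fun i hi v hv => VClosure.thetaOp_mem hi hv) m fun i hi => by
        have h := heig (i + 1) (by omega) (by omega)
        rwa [Nat.add_sub_cancel] at h
    rwa [← hQ, Nat.mod_eq_of_lt hm] at this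
  have hDH : DHGens q e B m ⊆ hSpan q e B m := fun y hy =>
    closure_DHGens_le_hSpan hm.le <| hcl ▸ AddSubgroup.subset_closure
      (Set.mem_iUnion₂.mpr ⟨m, Finset.self_mem_range_succ m, hy⟩)
  have hxm := hSpan_succ_le hDH (slice_mem_hSpan p hQ hxW hm)
  have hπx : restrictMod (q ^ e) m ∘ x ∈ W' := by
    convert expand_mul_X_pow_mem_of_mem_hSpan p hQ hm hxm using 1
    exact funext fun i => restrictMod_eq_expand_slice hQ₀ hm (x i)
  exact hxW' (by simpa using add_mem hx hπx)

open Polynomial in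
theorem stmt_18 {R : Type*} [CommRing R] (p : ℕ) [Fact p.Prime] [CharP R p]
    (γ : ℕ) (hγ : 1 ≤ γ) (q : ℕ) (hq : q = p ^ γ)
    (l : ℕ) (hl : 1 ≤ l) (A : Matrix (Fin l) (Fin l) (Polynomial R))
    (e : ℕ) (he : 1 ≤ e) (m : ℕ) (hm : m < q ^ e)
    (x : Fin l → Polynomial R)
    (hxW : x ∈ VClosure p (γ * e) (q ^ e)
      {w : Fin l → Polynomial R | ∃ u : Fin l → Polynomial R, w = (twistProd q A e).mulVec u})
    (hxW' : x ∉ VClosure p (γ * e) (q ^ e)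
      {w : Fin l → Polynomial R | ∃ u : Fin l → Polynomial R,
        w = fun i => X * (twistProd q A e).mulVec u i})
    (heig : ∀ i : ℕ, 1 ≤ i → i ≤ γ * e →
      (fun j => thetaOp (p ^ (i - 1)) (x j)) - (m / p ^ (i - 1) % p) • x ∈
        VClosure p (γ * e) (q ^ e)
          {w : Fin l → Polynomial R | ∃ u : Fin l → Polynomial R,
            w = fun i => X * (twistProd q A e).mulVec u i}) :
    AddSubgroup.closure (⋃ n ∈ Finset.range m, DHGens q e (twistProd q A e) n)
      ≠ AddSubgroup.closure (⋃ n ∈ Finset.range (m + 1), DHGens q e (twistProd q A e) n) :=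
  stmt_18_general p γ q hq l A e m hm x hxW hxW' heig
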